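/- Let A ∈ ℝ^{n×n}, let Ū ∈ St(r,n) satisfy the equilibrium condition (I_n − ŪŪᵀ)·A·Ū = 0, and let Ū_⊥ ∈ St(n−r,n) satisfy ŪᵀŪ_⊥ = 0 and Ū·Ūᵀ + Ū_⊥·Ū_⊥ᵀ = I_n. Then the characteristic polynomial of A factors as charpoly(A) = charpoly(ŪᵀAŪ) · charpoly(Ū_⊥ᵀAŪ_⊥). -/

import Mathlib

/-! The matrix `Q = [Ub Up]` satisfies `Q Qᵀ = 1`, so `Qᵀ A Q` has the characteristic polynomial
of `A` (`charpoly (P B) = charpoly (B P)` also for rectangular `P`, `B`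
when both products have the same size).
The equilibrium condition makes the lower-left block `Upᵀ A Ub` of `Qᵀ A Q` vanish, and the
characteristic polynomial of a block upper-triangular matrix is the product of those of its
diagonal blocks. -/

open Matrix

namespace Matrix

variable {R : Type*} [CommRing R] {m n : Type*} [Fintype n]

theorem charpoly_mul_mul_eq_of_mul_eq_one [Fintype m] [DecidableEq m] [DecidableEq n]
    (P : Matrix m n R) (M : Matrix n n R) (Q : Matrix n m R) (hQP : Q * P = 1)
    (hcard : Fintype.card m = Fintype.card n) :
    (P * M * Q).charpoly = M.charpoly := by
  have h := charpoly_mul_comm' P (M * Q)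
  rwa [hcard, Matrix.mul_assoc M, hQP, mul_one, ← Matrix.mul_assoc,
    (Polynomial.isRegular_X_pow _).left.eq_iff] at h

theorem fromRows_mul_mul_fromCols {m₁ m₂ n₁ n₂ : Type*} [Fintype n₁] [Fintype n₂]
    (P₁ : Matrix m₁ n R) (P₂ : Matrix m₂ n R) (M : Matrix n n R)
    (Q₁ : Matrix n n₁ R) (Q₂ : Matrix n n₂ R) :
    fromRows P₁ P₂ * M * fromCols Q₁ Q₂ =
      fromBlocks (P₁ * M * Q₁) (P₁ * M * Q₂) (P₂ * M * Q₁) (P₂ * M * Q₂) := by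
  rw [fromRows_mul, fromRows_mul_fromCols]

theorem mul_mul_eq_zero_of_one_sub_mul_mul_mul_eq_zero [DecidableEq n] {k : Type*} [Fintype k]
    {l : Type*} (M : Matrix n n R) (U : Matrix n k R) (V : Matrix k n R) (W : Matrix l n R)
    (hinv : (1 - U * V) * M * U = 0) (hWU : W * U = 0) :
    W * M * U = 0 := by
  calc W * M * U = W * ((1 - U * V) * M * U) + W * U * (V * M * U) := by
        simp only [Matrix.sub_mul, Matrix.mul_sub, Matrix.one_mul, Matrix.mul_assoc]; abel
    _ = 0 := by rw [hinv, hWU]; simp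

end Matrix

theorem charpoly_factorization_at_equilibrium
    (n r : ℕ) (hrn : r ≤ n)
    (A : Matrix (Fin n) (Fin n) ℝ)
    (Ub : Matrix (Fin n) (Fin r) ℝ)
    (hUbeq : (1 - Ub * Ubᵀ) * A * Ub = 0)
    (Up : Matrix (Fin n) (Fin (n - r)) ℝ)
    (horth : Ubᵀ * Up = 0)
    (hcompl : Ub * Ubᵀ + Up * Upᵀ = 1) :
    A.charpoly = (Ubᵀ * A * Ub).charpoly * (Upᵀ * A * Up).charpoly := by
  have hQP : fromCols Ub Up * fromRows Ubᵀ Upᵀ = 1 := by rw [fromCols_mul_fromRows, hcompl]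
  have hcard : Fintype.card (Fin r ⊕ Fin (n - r)) = Fintype.card (Fin n) := by
    simp only [Fintype.card_sum, Fintype.card_fin]; omega
  have hUpUb : Upᵀ * Ub = 0 := by
    rw [← transpose_transpose Ub, ← transpose_mul, horth, transpose_zero]
  have hlower : Upᵀ * A * Ub = 0 :=
    mul_mul_eq_zero_of_one_sub_mul_mul_mul_eq_zero A Ub Ubᵀ Upᵀ hUbeq hUpUb
  calc A.charpoly = (fromRows Ubᵀ Upᵀ * A * fromCols Ub Up).charpoly :=
        (charpoly_mul_mul_eq_of_mul_eq_one _ A _ hQP hcard).symm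
    _ = _ := by rw [fromRows_mul_mul_fromCols, hlower, charpoly_fromBlocks_zero₂₁]
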